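/- arXiv:2112.10708 — 3 statements merged into one kernel-verified Lean document; each statement's English description precedes it below -/
import Mathlib

section
/- Let W ∈ ℝ^{n×n} be a symmetric nonzero matrix with w = Σ_{i,j}|W_{ij}| and Π = I − (1/n)·1·1ᵀ. Then the maximum and minimum of I(v; W) over non-constant v ∈ ℝⁿ exist and equal (n/w)·λ_max and (n/w)·λ_min respectively, where λ_max and λ_min are the largest and smallest eigenvalues of the symmetric matrix Π W Π that admit an eigenvector lying in X = {x : x·1 = 0}; moreover these extreme values of I are attained at such eigenvectors. -/
open Matrix BigOperators Finset

noncomputable def mean {n : ℕ} (v : Fin n → ℝ) : ℝ := (∑ i, v i) / n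

noncomputable def centered {n : ℕ} (v : Fin n → ℝ) : Fin n → ℝ := fun i => v i - mean v

noncomputable def moranI {n : ℕ} (W : Matrix (Fin n) (Fin n) ℝ) (v : Fin n → ℝ) : ℝ :=
  ((n : ℝ) / ∑ i, ∑ j, |W i j|) * (centered v ⬝ᵥ (W *ᵥ centered v)) / (centered v ⬝ᵥ centered v)

/-- `v` is not a constant vector. -/
def Nonconst {n : ℕ} (v : Fin n → ℝ) : Prop := ∃ i j, v i ≠ v j

/-- The orthogonal projection `Π = I - (1/n)·𝟙𝟙ᵀ` onto the space of mean-zero vectors. -/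
noncomputable def proj (n : ℕ) : Matrix (Fin n) (Fin n) ℝ :=
  1 - ((n : ℝ)⁻¹) • Matrix.of (fun _ _ => (1 : ℝ))

/-! On the mean-zero subspace `X` the projection `Π` acts as the identity, so for non-constant `v`
the quotient in Moran's `I` is the Rayleigh quotient of `ΠWΠ` at the nonzero vector `Πv ∈ X`, and
every nonzero `x ∈ X` arises this way (`x = Πx`). The matrix `ΠWΠ` is symmetric and maps `ℝⁿ`
into `X`, so it restricts to a symmetric operator on `X`; there the supremum and infimum of the
Rayleigh quotient are attained at eigenvectors, and they are the largest and smallest eigenvalues.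
-/

open WithLp

namespace LinearMap.IsSymmetric

variable {E : Type*} [NormedAddCommGroup E] [InnerProductSpace ℝ E] [FiniteDimensional ℝ E]
  {T : E →ₗ[ℝ] E}

theorem exists_hasEigenvalue_forall_inner_le [Nontrivial E] (hT : T.IsSymmetric) :
    ∃ μ, Module.End.HasEigenvalue T μ ∧ ∀ x, inner ℝ (T x) x ≤ μ * ‖x‖ ^ 2 := by
  set T' := LinearMap.toContinuousLinearMap T
  have hbdd : BddAbove (Set.range fun x : {x : E // x ≠ 0} ↦ T'.rayleighQuotient x) :=
    ⟨‖T'‖, by rintro _ ⟨x, rfl⟩; exact (le_abs_self _).trans (T'.rayleighQuotient_le_norm x)⟩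
  refine ⟨_, hT.hasEigenvalue_iSup_of_finiteDimensional, fun x ↦ ?_⟩
  rcases eq_or_ne x 0 with rfl | hx
  · simp
  have hx2 : 0 < ‖x‖ ^ 2 := by positivity
  exact (div_le_iff₀ hx2).mp (le_ciSup hbdd ⟨x, hx⟩)

theorem exists_eigenvector_mem_forall_inner_le (hT : T.IsSymmetric) {K : Submodule ℝ E}
    (hK : ∀ x ∈ K, T x ∈ K) (hK0 : K ≠ ⊥) :
    ∃ μ, (∃ x, x ≠ 0 ∧ x ∈ K ∧ T x = μ • x) ∧ ∀ x ∈ K, inner ℝ (T x) x ≤ μ * ‖x‖ ^ 2 := by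
  have := Submodule.nontrivial_iff_ne_bot.mpr hK0
  obtain ⟨μ, hμ, hle⟩ := (hT.restrict_invariant hK).exists_hasEigenvalue_forall_inner_le
  obtain ⟨x, hx⟩ := hμ.exists_hasEigenvector
  refine ⟨μ, ⟨x, by simpa using hx.2, x.2, congrArg Subtype.val hx.apply_eq_smul⟩,
    fun y hy ↦ hle ⟨y, hy⟩⟩

end LinearMap.IsSymmetric

namespace Matrix

theorem dotProduct_self_pos {ι R : Type*} [Fintype ι] [Ring R] [LinearOrder R]
    [IsStrictOrderedRing R] {x : ι → R} (hx : x ≠ 0) : 0 < x ⬝ᵥ x :=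
  (Finset.sum_nonneg fun i _ ↦ mul_self_nonneg (x i)).lt_of_ne' (dotProduct_self_eq_zero.not.mpr hx)

variable {ι : Type*} [Fintype ι] [DecidableEq ι] {A : Matrix ι ι ℝ} {K : Submodule ℝ (ι → ℝ)}

theorem exists_eigenvector_mem_forall_dotProduct_le (hA : Aᵀ = A) (hK : ∀ x ∈ K, A *ᵥ x ∈ K)
    (hK0 : K ≠ ⊥) :
    ∃ μ, (∃ x, x ≠ 0 ∧ x ∈ K ∧ A *ᵥ x = μ • x) ∧ ∀ x ∈ K, x ⬝ᵥ A *ᵥ x ≤ μ * (x ⬝ᵥ x) := by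
  have hT : (toEuclideanLin A).IsSymmetric := by
    rwa [isSymmetric_toEuclideanLin_iff, IsHermitian, conjTranspose_eq_transpose_of_trivial]
  have hK0' : K.comap (WithLp.linearEquiv 2 ℝ (ι → ℝ)).toLinearMap ≠ ⊥ := by
    obtain ⟨x, hxK, hx0⟩ := Submodule.exists_mem_ne_zero_of_ne_bot hK0
    exact (Submodule.ne_bot_iff _).mpr ⟨toLp 2 x, hxK, by simpa using hx0⟩
  obtain ⟨μ, ⟨y, hy0, hyK, hAy⟩, hle⟩ :=
    hT.exists_eigenvector_mem_forall_inner_le (fun y hy ↦ hK (ofLp y) hy) hK0'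
  refine ⟨μ, ⟨ofLp y, by simpa using hy0, hyK, congrArg ofLp hAy⟩, fun x hx ↦ ?_⟩
  have := hle (toLp 2 x) hx
  rwa [← real_inner_self_eq_norm_sq, toLpLin_toLp, toLin'_apply, EuclideanSpace.inner_toLp_toLp,
    EuclideanSpace.inner_toLp_toLp, star_trivial] at this

theorem exists_eigenvector_mem_forall_le_dotProduct (hA : Aᵀ = A) (hK : ∀ x ∈ K, A *ᵥ x ∈ K)
    (hK0 : K ≠ ⊥) :
    ∃ μ, (∃ x, x ≠ 0 ∧ x ∈ K ∧ A *ᵥ x = μ • x) ∧ ∀ x ∈ K, μ * (x ⬝ᵥ x) ≤ x ⬝ᵥ A *ᵥ x := by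
  obtain ⟨μ, ⟨x, hx0, hxK, hAx⟩, hle⟩ := exists_eigenvector_mem_forall_dotProduct_le (A := -A)
    (by rw [transpose_neg, hA]) (fun x hx ↦ by simpa [neg_mulVec] using K.neg_mem (hK x hx)) hK0
  refine ⟨-μ, ⟨x, hx0, hxK, by simpa [neg_mulVec] using congrArg Neg.neg hAx⟩, fun y hy ↦ ?_⟩
  have := hle y hy
  simp only [neg_mulVec, dotProduct_neg] at this
  linarith

theorem exists_isGreatest_eigenvalues_mem (hA : Aᵀ = A) (hK : ∀ x ∈ K, A *ᵥ x ∈ K)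
    (hK0 : K ≠ ⊥) :
    ∃ μ, IsGreatest {ν | ∃ x, x ≠ 0 ∧ x ∈ K ∧ A *ᵥ x = ν • x} μ ∧
      ∀ x ∈ K, x ⬝ᵥ A *ᵥ x ≤ μ * (x ⬝ᵥ x) := by
  obtain ⟨μ, hμ, hle⟩ := exists_eigenvector_mem_forall_dotProduct_le hA hK hK0
  refine ⟨μ, ⟨hμ, ?_⟩, hle⟩
  rintro ν ⟨x, hx0, hxK, hAx⟩
  have := hle x hxK
  rw [hAx, dotProduct_smul, smul_eq_mul] at this
  exact le_of_mul_le_mul_right this (dotProduct_self_pos hx0)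

theorem exists_isLeast_eigenvalues_mem (hA : Aᵀ = A) (hK : ∀ x ∈ K, A *ᵥ x ∈ K)
    (hK0 : K ≠ ⊥) :
    ∃ μ, IsLeast {ν | ∃ x, x ≠ 0 ∧ x ∈ K ∧ A *ᵥ x = ν • x} μ ∧
      ∀ x ∈ K, μ * (x ⬝ᵥ x) ≤ x ⬝ᵥ A *ᵥ x := by
  obtain ⟨μ, hμ, hle⟩ := exists_eigenvector_mem_forall_le_dotProduct hA hK hK0
  refine ⟨μ, ⟨hμ, ?_⟩, hle⟩
  rintro ν ⟨x, hx0, hxK, hAx⟩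
  have := hle x hxK
  rw [hAx, dotProduct_smul, smul_eq_mul] at this
  exact le_of_mul_le_mul_right this (dotProduct_self_pos hx0)

end Matrix

def meanZero (n : ℕ) : Submodule ℝ (Fin n → ℝ) where
  carrier := {x | (x ⬝ᵥ fun _ ↦ 1) = 0}
  add_mem' := by simp_all [add_dotProduct]
  zero_mem' := zero_dotProduct _
  smul_mem' := by simp_all [smul_dotProduct]

section MeanZero

variable {n : ℕ}

theorem mem_meanZero {x : Fin n → ℝ} : x ∈ meanZero n ↔ ∑ i, x i = 0 := by
  simp [meanZero, dotProduct]

theorem centered_mem_meanZero (v : Fin n → ℝ) : centered v ∈ meanZero n := by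
  rcases eq_or_ne n 0 with rfl | hn
  · simp [mem_meanZero]
  rw [mem_meanZero]
  simp only [centered, mean, Finset.sum_sub_distrib, Finset.sum_const, Finset.card_univ,
    Fintype.card_fin, nsmul_eq_mul]
  field_simp
  ring

theorem centered_eq_self {x : Fin n → ℝ} (hx : x ∈ meanZero n) : centered x = x := by
  funext i
  simp [centered, mean, mem_meanZero.mp hx]

theorem dotProduct_centered {x : Fin n → ℝ} (hx : x ∈ meanZero n) (y : Fin n → ℝ) :
    x ⬝ᵥ centered y = x ⬝ᵥ y := by
  simp [centered, dotProduct, mul_sub, Finset.sum_sub_distrib, ← Finset.sum_mul,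
    mem_meanZero.mp hx]

theorem proj_mulVec (x : Fin n → ℝ) : proj n *ᵥ x = centered x := by
  funext i
  simp [proj, centered, mean, mulVec, dotProduct, Finset.mul_sum, div_eq_inv_mul, sub_mul,
    Finset.sum_sub_distrib, one_apply, ite_mul]

theorem transpose_proj : (proj n)ᵀ = proj n := by
  ext i j
  simp [proj, one_apply, eq_comm]

theorem proj_mul_mulVec_mem_meanZero (M : Matrix (Fin n) (Fin n) ℝ) (x : Fin n → ℝ) :
    (proj n * M) *ᵥ x ∈ meanZero n := by
  rw [← mulVec_mulVec, proj_mulVec]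
  exact centered_mem_meanZero _

theorem dotProduct_proj_mul_mul_proj_mulVec {x : Fin n → ℝ} (hx : x ∈ meanZero n)
    (M : Matrix (Fin n) (Fin n) ℝ) : x ⬝ᵥ (proj n * M * proj n) *ᵥ x = x ⬝ᵥ M *ᵥ x := by
  rw [← mulVec_mulVec, ← mulVec_mulVec, proj_mulVec, proj_mulVec, dotProduct_centered hx,
    centered_eq_self hx]

theorem centered_ne_zero {v : Fin n → ℝ} (hv : Nonconst v) : centered v ≠ 0 := by
  obtain ⟨i, j, hij⟩ := hv
  intro h
  have hi := congrFun h i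
  have hj := congrFun h j
  simp only [centered, Pi.zero_apply, sub_eq_zero] at hi hj
  exact hij (hi.trans hj.symm)

theorem nonconst_of_mem_meanZero {x : Fin n → ℝ} (hx0 : x ≠ 0) (hx : x ∈ meanZero n) :
    Nonconst x := by
  obtain ⟨i, hi⟩ := Function.ne_iff.mp hx0
  by_contra h
  have hconst : ∀ j, x j = x i := fun j ↦ not_not.mp fun hj ↦ h ⟨j, i, hj⟩
  have : (n : ℝ) * x i = 0 := by simpa [hconst] using mem_meanZero.mp hx
  exact hi ((mul_eq_zero.mp this).resolve_left (by simpa using i.pos.ne'))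

theorem meanZero_ne_bot (hn : 2 ≤ n) : meanZero n ≠ ⊥ := by
  let i : Fin n := ⟨0, by omega⟩
  let j : Fin n := ⟨1, by omega⟩
  have hij : i ≠ j := by simp [i, j, Fin.ext_iff]
  refine (Submodule.ne_bot_iff _).mpr ⟨Pi.single i 1 - Pi.single j 1, ?_, ?_⟩
  · simp [mem_meanZero, Finset.sum_sub_distrib]
  · intro h
    simpa [hij] using congrFun h i

end MeanZero

section Moran

variable {n : ℕ} {W : Matrix (Fin n) (Fin n) ℝ} {μ : ℝ}

theorem moranI_eq_of_eigenvector {x : Fin n → ℝ} (hx0 : x ≠ 0) (hx : x ∈ meanZero n)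
    (hWx : (proj n * W * proj n) *ᵥ x = μ • x) :
    moranI W x = ((n : ℝ) / ∑ i, ∑ j, |W i j|) * μ := by
  have hxx := dotProduct_self_pos hx0
  rw [moranI, centered_eq_self hx, ← dotProduct_proj_mul_mul_proj_mulVec hx, hWx,
    dotProduct_smul, smul_eq_mul]
  field_simp

theorem moranI_le
    (hle : ∀ x ∈ meanZero n, x ⬝ᵥ (proj n * W * proj n) *ᵥ x ≤ μ * (x ⬝ᵥ x))
    {v : Fin n → ℝ} (hv : Nonconst v) :
    moranI W v ≤ ((n : ℝ) / ∑ i, ∑ j, |W i j|) * μ := by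
  have hxx := dotProduct_self_pos (centered_ne_zero hv)
  have hle_v := hle _ (centered_mem_meanZero v)
  rw [dotProduct_proj_mul_mul_proj_mulVec (centered_mem_meanZero v)] at hle_v
  rw [moranI, mul_div_assoc]
  gcongr
  rwa [div_le_iff₀ hxx]

theorem le_moranI
    (hle : ∀ x ∈ meanZero n, μ * (x ⬝ᵥ x) ≤ x ⬝ᵥ (proj n * W * proj n) *ᵥ x)
    {v : Fin n → ℝ} (hv : Nonconst v) :
    ((n : ℝ) / ∑ i, ∑ j, |W i j|) * μ ≤ moranI W v := by
  have hxx := dotProduct_self_pos (centered_ne_zero hv)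
  have hle_v := hle _ (centered_mem_meanZero v)
  rw [dotProduct_proj_mul_mul_proj_mulVec (centered_mem_meanZero v)] at hle_v
  rw [moranI, mul_div_assoc]
  gcongr
  rwa [le_div_iff₀ hxx]

theorem isGreatest_moranI
    (hμ : ∃ x, x ≠ 0 ∧ x ∈ meanZero n ∧ (proj n * W * proj n) *ᵥ x = μ • x)
    (hle : ∀ x ∈ meanZero n, x ⬝ᵥ (proj n * W * proj n) *ᵥ x ≤ μ * (x ⬝ᵥ x)) :
    IsGreatest {y | ∃ v, Nonconst v ∧ moranI W v = y} (((n : ℝ) / ∑ i, ∑ j, |W i j|) * μ) := by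
  obtain ⟨x, hx0, hx, hWx⟩ := hμ
  refine ⟨⟨x, nonconst_of_mem_meanZero hx0 hx, moranI_eq_of_eigenvector hx0 hx hWx⟩, ?_⟩
  rintro _ ⟨v, hv, rfl⟩
  exact moranI_le hle hv

theorem isLeast_moranI
    (hμ : ∃ x, x ≠ 0 ∧ x ∈ meanZero n ∧ (proj n * W * proj n) *ᵥ x = μ • x)
    (hle : ∀ x ∈ meanZero n, μ * (x ⬝ᵥ x) ≤ x ⬝ᵥ (proj n * W * proj n) *ᵥ x) :
    IsLeast {y | ∃ v, Nonconst v ∧ moranI W v = y} (((n : ℝ) / ∑ i, ∑ j, |W i j|) * μ) := by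
  obtain ⟨x, hx0, hx, hWx⟩ := hμ
  refine ⟨⟨x, nonconst_of_mem_meanZero hx0 hx, moranI_eq_of_eigenvector hx0 hx hWx⟩, ?_⟩
  rintro _ ⟨v, hv, rfl⟩
  exact le_moranI hle hv

end Moran

theorem moranI_extreme_values_general {n : ℕ} (hn : 2 ≤ n)
    (W : Matrix (Fin n) (Fin n) ℝ) (hW : Wᵀ = W) :
    ∃ lmax lmin : ℝ,
      IsGreatest {lam : ℝ | ∃ x : Fin n → ℝ, x ≠ 0 ∧ (x ⬝ᵥ fun _ => 1) = 0 ∧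
        (proj n * W * proj n) *ᵥ x = lam • x} lmax ∧
      IsLeast {lam : ℝ | ∃ x : Fin n → ℝ, x ≠ 0 ∧ (x ⬝ᵥ fun _ => 1) = 0 ∧
        (proj n * W * proj n) *ᵥ x = lam • x} lmin ∧
      IsGreatest {y : ℝ | ∃ v : Fin n → ℝ, Nonconst v ∧ moranI W v = y}
        (((n : ℝ) / ∑ i, ∑ j, |W i j|) * lmax) ∧
      IsLeast {y : ℝ | ∃ v : Fin n → ℝ, Nonconst v ∧ moranI W v = y}
        (((n : ℝ) / ∑ i, ∑ j, |W i j|) * lmin) ∧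
      (∃ x : Fin n → ℝ, x ≠ 0 ∧ (x ⬝ᵥ fun _ => 1) = 0 ∧
        (proj n * W * proj n) *ᵥ x = lmax • x ∧
        moranI W x = ((n : ℝ) / ∑ i, ∑ j, |W i j|) * lmax) ∧
      (∃ x : Fin n → ℝ, x ≠ 0 ∧ (x ⬝ᵥ fun _ => 1) = 0 ∧
        (proj n * W * proj n) *ᵥ x = lmin • x ∧
        moranI W x = ((n : ℝ) / ∑ i, ∑ j, |W i j|) * lmin) := by
  have hA : (proj n * W * proj n)ᵀ = proj n * W * proj n := by
    rw [transpose_mul, transpose_mul, transpose_proj, hW, Matrix.mul_assoc]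
  have hX : ∀ x ∈ meanZero n, (proj n * W * proj n) *ᵥ x ∈ meanZero n := fun x _ ↦ by
    rw [Matrix.mul_assoc]
    exact proj_mul_mulVec_mem_meanZero _ x
  obtain ⟨lmax, hmax, hle_max⟩ := exists_isGreatest_eigenvalues_mem hA hX (meanZero_ne_bot hn)
  obtain ⟨lmin, hmin, hle_min⟩ := exists_isLeast_eigenvalues_mem hA hX (meanZero_ne_bot hn)
  obtain ⟨xmax, hxmax0, hxmax, hWxmax⟩ := hmax.1
  obtain ⟨xmin, hxmin0, hxmin, hWxmin⟩ := hmin.1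
  exact ⟨lmax, lmin, hmax, hmin, isGreatest_moranI hmax.1 hle_max, isLeast_moranI hmin.1 hle_min,
    ⟨xmax, hxmax0, hxmax, hWxmax, moranI_eq_of_eigenvector hxmax0 hxmax hWxmax⟩,
    ⟨xmin, hxmin0, hxmin, hWxmin, moranI_eq_of_eigenvector hxmin0 hxmin hWxmin⟩⟩

/-- the extreme values of Moran's I over non-constant vectors are
`(n/w)·λmax` and `(n/w)·λmin`, where `λmax`, `λmin` are the largest and smallest
eigenvalues of `ΠWΠ` admitting an eigenvector in the mean-zero subspace, and the
extreme values are attained at such eigenvectors. -/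
theorem moranI_extreme_values {n : ℕ} (hn : 2 ≤ n)
    (W : Matrix (Fin n) (Fin n) ℝ) (hW : Wᵀ = W) (hW0 : W ≠ 0) :
    ∃ lmax lmin : ℝ,
      IsGreatest {lam : ℝ | ∃ x : Fin n → ℝ, x ≠ 0 ∧ (x ⬝ᵥ fun _ => 1) = 0 ∧
        (proj n * W * proj n) *ᵥ x = lam • x} lmax ∧
      IsLeast {lam : ℝ | ∃ x : Fin n → ℝ, x ≠ 0 ∧ (x ⬝ᵥ fun _ => 1) = 0 ∧
        (proj n * W * proj n) *ᵥ x = lam • x} lmin ∧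
      IsGreatest {y : ℝ | ∃ v : Fin n → ℝ, Nonconst v ∧ moranI W v = y}
        (((n : ℝ) / ∑ i, ∑ j, |W i j|) * lmax) ∧
      IsLeast {y : ℝ | ∃ v : Fin n → ℝ, Nonconst v ∧ moranI W v = y}
        (((n : ℝ) / ∑ i, ∑ j, |W i j|) * lmin) ∧
      (∃ x : Fin n → ℝ, x ≠ 0 ∧ (x ⬝ᵥ fun _ => 1) = 0 ∧
        (proj n * W * proj n) *ᵥ x = lmax • x ∧
        moranI W x = ((n : ℝ) / ∑ i, ∑ j, |W i j|) * lmax) ∧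
      (∃ x : Fin n → ℝ, x ≠ 0 ∧ (x ⬝ᵥ fun _ => 1) = 0 ∧
        (proj n * W * proj n) *ᵥ x = lmin • x ∧
        moranI W x = ((n : ℝ) / ∑ i, ∑ j, |W i j|) * lmin) :=
  moranI_extreme_values_general hn W hW
end

section
/- Let Q ∈ ℝ^{n×n} be doubly stochastic (nonnegative entries, all rows and columns summing to 1), let v ∈ ℝⁿ be non-constant with mean v̄, and let x = v − v̄·1. Then the vector Qᵀv also has mean v̄, and I(v; QQᵀ) = ‖Qᵀx‖² / ‖x‖² = σ₁²/σ₀², where σ₀² is the variance of the entries of v and σ₁² is the variance of the entries of Qᵀv. In particular I(v; QQᵀ) ≥ 0. -/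
open Matrix BigOperators Finset

/-- The variance of the entries of a vector. -/
noncomputable def entryVar {n : ℕ} (u : Fin n → ℝ) : ℝ := (∑ i, (u i - mean u) ^ 2) / n

lemma entryVar_eq {n : ℕ} (u : Fin n → ℝ) :
    entryVar u = (centered u ⬝ᵥ centered u) / n := by
  simp [entryVar, centered, dotProduct, sq]

/-- for a doubly stochastic `Q`, the vector `Qᵀv` has the same mean
as `v`, and `I(v; QQᵀ) = ‖Qᵀx‖²/‖x‖² = σ₁²/σ₀² ≥ 0`, the one-step variance reduction
ratio of the Markov chain `Q`. -/
theorem moranI_variance_reduction {n : ℕ}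
    (Q : Matrix (Fin n) (Fin n) ℝ) (hnn : ∀ i j, 0 ≤ Q i j)
    (hrow : ∀ i, ∑ j, Q i j = 1) (hcol : ∀ j, ∑ i, Q i j = 1)
    (v : Fin n → ℝ) (hv : Nonconst v) :
    mean (Qᵀ *ᵥ v) = mean v ∧
    moranI (Q * Qᵀ) v =
      ((Qᵀ *ᵥ centered v) ⬝ᵥ (Qᵀ *ᵥ centered v)) / (centered v ⬝ᵥ centered v) ∧
    moranI (Q * Qᵀ) v = entryVar (Qᵀ *ᵥ v) / entryVar v ∧
    0 ≤ moranI (Q * Qᵀ) v := by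
  obtain ⟨i0, j0, hij⟩ := hv
  have hn : 0 < (n : ℝ) := by exact_mod_cast i0.pos
  set x := centered v with hxdef
  -- positivity of x ⬝ x
  have hxi : x i0 ≠ x j0 := by
    simp only [hxdef, centered]
    intro h; apply hij; linarith
  have hxne : ∃ i, x i ≠ 0 := by
    by_contra h
    push_neg at h
    exact hxi ((h i0).trans (h j0).symm)
  obtain ⟨i1, hi1⟩ := hxne
  have hxx : 0 < x ⬝ᵥ x := by
    have : 0 < ∑ i, x i * x i :=
      Finset.sum_pos' (fun i _ => mul_self_nonneg _)
        ⟨i1, Finset.mem_univ i1, mul_self_pos.mpr hi1⟩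
    simpa [dotProduct] using this
  -- mean of Qᵀ *ᵥ v
  have hmean : mean (Qᵀ *ᵥ v) = mean v := by
    unfold mean
    congr 1
    simp only [mulVec, dotProduct, transpose_apply]
    rw [Finset.sum_comm]
    calc ∑ j, ∑ i, Q j i * v j = ∑ j, (∑ i, Q j i) * v j := by
          simp [Finset.sum_mul]
      _ = ∑ j, v j := by simp [hrow]
  -- the sum of absolute values of entries of Q * Qᵀ is n
  have hw : (∑ i, ∑ j, |(Q * Qᵀ) i j|) = (n : ℝ) := by
    have habs : ∀ i j, |(Q * Qᵀ) i j| = (Q * Qᵀ) i j := by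
      intro i j
      apply abs_of_nonneg
      simp only [Matrix.mul_apply, transpose_apply]
      exact Finset.sum_nonneg fun k _ => mul_nonneg (hnn i k) (hnn j k)
    calc ∑ i, ∑ j, |(Q * Qᵀ) i j| = ∑ i, ∑ j, ∑ k, Q i k * Q j k := by
          congr 1; ext i; congr 1; ext j
          rw [habs i j]; simp [Matrix.mul_apply]
      _ = ∑ i, ∑ k, Q i k * ∑ j, Q j k := by
          congr 1; ext i
          rw [Finset.sum_comm]
          simp [Finset.mul_sum]
      _ = (n : ℝ) := by simp [hcol, hrow, Finset.card_univ]
  -- quadratic form identity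
  have hquad : x ⬝ᵥ ((Q * Qᵀ) *ᵥ x) = (Qᵀ *ᵥ x) ⬝ᵥ (Qᵀ *ᵥ x) := by
    rw [← Matrix.mulVec_mulVec, Matrix.dotProduct_mulVec, ← Matrix.mulVec_transpose]
  -- first equation
  have hmor : moranI (Q * Qᵀ) v = ((Qᵀ *ᵥ x) ⬝ᵥ (Qᵀ *ᵥ x)) / (x ⬝ᵥ x) := by
    unfold moranI
    rw [← hxdef, hw, hquad, div_self hn.ne', one_mul]
  -- centered (Qᵀ *ᵥ v) = Qᵀ *ᵥ x
  have hcent : centered (Qᵀ *ᵥ v) = Qᵀ *ᵥ x := by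
    funext i
    simp only [centered, hmean, hxdef, mulVec, dotProduct, transpose_apply]
    have : ∑ j, Q j i * (v j - mean v) = (∑ j, Q j i * v j) - (∑ j, Q j i) * mean v := by
      rw [Finset.sum_mul, ← Finset.sum_sub_distrib]
      congr 1; ext j; ring
    rw [this, hcol i, one_mul]
  -- second equation
  have hvar : moranI (Q * Qᵀ) v = entryVar (Qᵀ *ᵥ v) / entryVar v := by
    rw [hmor, entryVar_eq, entryVar_eq, hcent, ← hxdef]
    rw [div_div_div_eq]
    rw [mul_comm (Qᵀ *ᵥ x ⬝ᵥ Qᵀ *ᵥ x) (n:ℝ), mul_div_mul_left _ _ hn.ne']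
  refine ⟨hmean, hmor, hvar, ?_⟩
  rw [hmor]
  exact div_nonneg (Finset.sum_nonneg fun i _ => mul_self_nonneg _) hxx.le
end

section
/- For each integer n ≥ 1 let DS_n be the double-star graph on 2n + 2 vertices: two adjacent hub vertices h₁ and h₂, with h₁ adjacent to n leaf vertices and h₂ adjacent to n other leaf vertices, and no other edges. Fix a real number a ≠ 0 and let v_a ∈ ℝ^{2n+2} take the value +1 at h₁, −1 at h₂, +1/a at each leaf of h₁, and −1/a at each leaf of h₂ (so v_a has mean 0). Then lim_{n→∞} I(v_a; A_n) = a and lim_{n→∞} I(v_a; P_n) = a, where A_n and P_n are the adjacency and row-standardized adjacency matrices of DS_n. In particular, Moran's I with respect to A and with respect to P is unbounded above and below over all finite simple graphs and non-constant vectors. -/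
open Matrix BigOperators Finset Filter

/-- The adjacency matrix of the double-star graph `DS_n` on `2n+2` vertices: vertex `0`
(hub `h₁`) and vertex `1` (hub `h₂`) are adjacent; vertices `2, …, n+1` are the leaves of
`h₁`; vertices `n+2, …, 2n+1` are the leaves of `h₂`; there are no other edges. -/
def dsAdj (n : ℕ) : Matrix (Fin (2 * n + 2)) (Fin (2 * n + 2)) ℝ :=
  Matrix.of fun i j =>
    if (i.val = 0 ∧ j.val = 1) ∨ (i.val = 1 ∧ j.val = 0) ∨
       (i.val = 0 ∧ 2 ≤ j.val ∧ j.val < n + 2) ∨ (j.val = 0 ∧ 2 ≤ i.val ∧ i.val < n + 2) ∨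
       (i.val = 1 ∧ n + 2 ≤ j.val) ∨ (j.val = 1 ∧ n + 2 ≤ i.val)
    then 1 else 0

/-- The row-standardized adjacency matrix of the double-star graph `DS_n`. -/
noncomputable def dsP (n : ℕ) : Matrix (Fin (2 * n + 2)) (Fin (2 * n + 2)) ℝ :=
  Matrix.of fun i j => dsAdj n i j / ∑ k, dsAdj n i k

/-- The vector `v_a` on `DS_n`: `+1` at hub `h₁`, `-1` at hub `h₂`, `+1/a` at the leaves
of `h₁`, and `-1/a` at the leaves of `h₂`. -/
noncomputable def dsV (n : ℕ) (a : ℝ) : Fin (2 * n + 2) → ℝ :=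
  fun i =>
    if i.val = 0 then 1
    else if i.val = 1 then -1
    else if i.val < n + 2 then 1 / a
    else -1 / a

/-- A real matrix is the adjacency matrix of a finite simple undirected graph:
symmetric, zero diagonal, with `0`/`1` entries. -/
def IsAdjacencyMatrix {m : ℕ} (B : Matrix (Fin m) (Fin m) ℝ) : Prop :=
  Bᵀ = B ∧ (∀ i, B i i = 0) ∧ (∀ i j, B i j = 0 ∨ B i j = 1)

lemma sum_split (n : ℕ) (f : ℕ → ℝ) :
    ∑ i ∈ Finset.range (2*n+2), f i
      = f 0 + f 1 + (∑ i ∈ Finset.Ico 2 (n+2), f i) + ∑ i ∈ Finset.Ico (n+2) (2*n+2), f i := by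
  rw [Finset.range_eq_Ico,
      ← Finset.sum_Ico_consecutive f (by omega : 0 ≤ n+2) (by omega : n+2 ≤ 2*n+2),
      ← Finset.sum_Ico_consecutive f (by omega : 0 ≤ 2) (by omega : 2 ≤ n+2)]
  have h : ∑ i ∈ Finset.Ico 0 2, f i = f 0 + f 1 := by
    rw [← Finset.range_eq_Ico]
    simp [Finset.sum_range_succ]
  rw [h]

lemma sum_const_block (a b : ℕ) (f : ℕ → ℝ) (c : ℝ) (h : ∀ i, a ≤ i → i < b → f i = c) :
    ∑ i ∈ Finset.Ico a b, f i = ((b - a : ℕ) : ℝ) * c := by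
  calc ∑ i ∈ Finset.Ico a b, f i = ∑ _i ∈ Finset.Ico a b, c :=
        Finset.sum_congr rfl (fun i hi => h i (Finset.mem_Ico.mp hi).1 (Finset.mem_Ico.mp hi).2)
    _ = ((b - a : ℕ) : ℝ) * c := by rw [Finset.sum_const, Nat.card_Ico, nsmul_eq_mul]

def nA (n i j : ℕ) : ℝ :=
  if (i = 0 ∧ j = 1) ∨ (i = 1 ∧ j = 0) ∨
     (i = 0 ∧ 2 ≤ j ∧ j < n + 2) ∨ (j = 0 ∧ 2 ≤ i ∧ i < n + 2) ∨
     (i = 1 ∧ n + 2 ≤ j) ∨ (j = 1 ∧ n + 2 ≤ i)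
  then 1 else 0

noncomputable def nv (n : ℕ) (a : ℝ) (i : ℕ) : ℝ :=
  if i = 0 then 1 else if i = 1 then -1 else if i < n + 2 then 1 / a else -1 / a

lemma nA_abs (n i j : ℕ) : |nA n i j| = nA n i j := by
  unfold nA; split_ifs <;> simp

lemma nv0 (n : ℕ) (a : ℝ) : nv n a 0 = 1 := rfl
lemma nv1 (n : ℕ) (a : ℝ) : nv n a 1 = -1 := rfl
lemma nvL (n : ℕ) (a : ℝ) {j : ℕ} (h1 : 2 ≤ j) (h2 : j < n + 2) : nv n a j = 1 / a := by
  unfold nv; rw [if_neg (by omega), if_neg (by omega), if_pos h2]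
lemma nvR (n : ℕ) (a : ℝ) {j : ℕ} (h1 : n + 2 ≤ j) : nv n a j = -1 / a := by
  unfold nv; rw [if_neg (by omega), if_neg (by omega), if_neg (by omega)]

lemma nA_pos (n i j : ℕ)
    (h : (i = 0 ∧ j = 1) ∨ (i = 1 ∧ j = 0) ∨
     (i = 0 ∧ 2 ≤ j ∧ j < n + 2) ∨ (j = 0 ∧ 2 ≤ i ∧ i < n + 2) ∨
     (i = 1 ∧ n + 2 ≤ j) ∨ (j = 1 ∧ n + 2 ≤ i)) : nA n i j = 1 := if_pos h

lemma nA_neg (n i j : ℕ)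
    (h : ¬((i = 0 ∧ j = 1) ∨ (i = 1 ∧ j = 0) ∨
     (i = 0 ∧ 2 ≤ j ∧ j < n + 2) ∨ (j = 0 ∧ 2 ≤ i ∧ i < n + 2) ∨
     (i = 1 ∧ n + 2 ≤ j) ∨ (j = 1 ∧ n + 2 ≤ i))) : nA n i j = 0 := if_neg h

lemma rowAv (n : ℕ) (a : ℝ) (i : ℕ) :
    ∑ j ∈ Finset.range (2*n+2), nA n i j * nv n a j =
      if i = 0 then (n:ℝ)/a - 1 else if i = 1 then 1 - (n:ℝ)/a
      else if i < n + 2 then 1 else -1 := by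
  have e1 : (n+2) - 2 = n := by omega
  have e2 : 2*n+2 - (n+2) = n := by omega
  rw [sum_split]
  rcases (by omega : i = 0 ∨ i = 1 ∨ (2 ≤ i ∧ i < n+2) ∨ (n+2 ≤ i)) with h|h|h|h
  · subst h
    rw [sum_const_block 2 (n+2) _ (1/a)
          (fun j h1 h2 => by rw [nA_pos n 0 j (by omega), nvL n a h1 h2, one_mul]),
        sum_const_block (n+2) (2*n+2) _ 0
          (fun j h1 h2 => by rw [nA_neg n 0 j (by omega), zero_mul]),
        nA_neg n 0 0 (by omega), nA_pos n 0 1 (by omega), nv0, nv1, if_pos rfl, e1, e2]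
    ring
  · subst h
    rw [sum_const_block 2 (n+2) _ 0
          (fun j h1 h2 => by rw [nA_neg n 1 j (by omega), zero_mul]),
        sum_const_block (n+2) (2*n+2) _ (-1/a)
          (fun j h1 h2 => by rw [nA_pos n 1 j (by omega), nvR n a h1, one_mul]),
        nA_pos n 1 0 (by omega), nA_neg n 1 1 (by omega), nv0, nv1,
        if_neg (by omega), if_pos rfl, e1, e2]
    ring
  · rw [sum_const_block 2 (n+2) _ 0
          (fun j h1 h2 => by rw [nA_neg n i j (by omega), zero_mul]),
        sum_const_block (n+2) (2*n+2) _ 0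
          (fun j h1 h2 => by rw [nA_neg n i j (by omega), zero_mul]),
        nA_pos n i 0 (by omega), nA_neg n i 1 (by omega), nv0, nv1,
        if_neg (by omega), if_neg (by omega), if_pos h.2]
    ring
  · rw [sum_const_block 2 (n+2) _ 0
          (fun j h1 h2 => by rw [nA_neg n i j (by omega), zero_mul]),
        sum_const_block (n+2) (2*n+2) _ 0
          (fun j h1 h2 => by rw [nA_neg n i j (by omega), zero_mul]),
        nA_neg n i 0 (by omega), nA_pos n i 1 (by omega), nv0, nv1,
        if_neg (by omega), if_neg (by omega), if_neg (by omega)]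
    ring

lemma rowAsum (n : ℕ) (i : ℕ) :
    ∑ j ∈ Finset.range (2*n+2), nA n i j =
      if i = 0 ∨ i = 1 then (n:ℝ)+1 else 1 := by
  have e1 : (n+2) - 2 = n := by omega
  have e2 : 2*n+2 - (n+2) = n := by omega
  rw [sum_split]
  rcases (by omega : i = 0 ∨ i = 1 ∨ (2 ≤ i ∧ i < n+2) ∨ (n+2 ≤ i)) with h|h|h|h
  · subst h
    rw [sum_const_block 2 (n+2) _ 1 (fun j h1 h2 => nA_pos n 0 j (by omega)),
        sum_const_block (n+2) (2*n+2) _ 0 (fun j h1 h2 => nA_neg n 0 j (by omega)),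
        nA_neg n 0 0 (by omega), nA_pos n 0 1 (by omega), if_pos (by omega), e1, e2]
    ring
  · subst h
    rw [sum_const_block 2 (n+2) _ 0 (fun j h1 h2 => nA_neg n 1 j (by omega)),
        sum_const_block (n+2) (2*n+2) _ 1 (fun j h1 h2 => nA_pos n 1 j (by omega)),
        nA_pos n 1 0 (by omega), nA_neg n 1 1 (by omega), if_pos (by omega), e1, e2]
    ring
  · rw [sum_const_block 2 (n+2) _ 0 (fun j h1 h2 => nA_neg n i j (by omega)),
        sum_const_block (n+2) (2*n+2) _ 0 (fun j h1 h2 => nA_neg n i j (by omega)),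
        nA_pos n i 0 (by omega), nA_neg n i 1 (by omega), if_neg (by omega)]
    ring
  · rw [sum_const_block 2 (n+2) _ 0 (fun j h1 h2 => nA_neg n i j (by omega)),
        sum_const_block (n+2) (2*n+2) _ 0 (fun j h1 h2 => nA_neg n i j (by omega)),
        nA_neg n i 0 (by omega), nA_pos n i 1 (by omega), if_neg (by omega)]
    ring

lemma mean_dsV (n : ℕ) (a : ℝ) : mean (dsV n a) = 0 := by
  have e1 : (n+2) - 2 = n := by omega
  have e2 : 2*n+2 - (n+2) = n := by omega
  have hs : ∑ i, dsV n a i = 0 := by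
    show ∑ i : Fin (2*n+2), nv n a i.val = 0
    rw [Fin.sum_univ_eq_sum_range (nv n a), sum_split,
        sum_const_block 2 (n+2) _ (1/a) (fun j h1 h2 => nvL n a h1 h2),
        sum_const_block (n+2) (2*n+2) _ (-1/a) (fun j h1 h2 => nvR n a h1),
        nv0, nv1, e1, e2]
    ring
  simp [mean, hs]

lemma centered_dsV (n : ℕ) (a : ℝ) : centered (dsV n a) = dsV n a :=
  funext fun i => by simp [centered, mean_dsV]

lemma vv (n : ℕ) (a : ℝ) : dsV n a ⬝ᵥ dsV n a = 2 + 2*(n:ℝ)/a^2 := by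
  have e1 : (n+2) - 2 = n := by omega
  have e2 : 2*n+2 - (n+2) = n := by omega
  show ∑ i : Fin (2*n+2), nv n a i.val * nv n a i.val = _
  rw [Fin.sum_univ_eq_sum_range (fun i => nv n a i * nv n a i), sum_split,
      sum_const_block 2 (n+2) _ ((1/a)*(1/a)) (fun j h1 h2 => by rw [nvL n a h1 h2]),
      sum_const_block (n+2) (2*n+2) _ ((-1/a)*(-1/a)) (fun j h1 h2 => by rw [nvR n a h1]),
      nv0, nv1, e1, e2]
  ring

lemma vAv (n : ℕ) (a : ℝ) : dsV n a ⬝ᵥ (dsAdj n *ᵥ dsV n a) = 4*(n:ℝ)/a - 2 := by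
  have e1 : (n+2) - 2 = n := by omega
  have e2 : 2*n+2 - (n+2) = n := by omega
  have inner : ∀ i : Fin (2*n+2), (dsAdj n *ᵥ dsV n a) i =
      (if i.val = 0 then (n:ℝ)/a - 1 else if i.val = 1 then 1 - (n:ℝ)/a
       else if i.val < n + 2 then 1 else -1) := fun i => by
    show ∑ j : Fin (2*n+2), nA n i.val j.val * nv n a j.val = _
    rw [Fin.sum_univ_eq_sum_range (fun j => nA n i.val j * nv n a j)]
    exact rowAv n a i.val
  show ∑ i : Fin (2*n+2), nv n a i.val * (dsAdj n *ᵥ dsV n a) i = _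
  simp only [inner]
  rw [Fin.sum_univ_eq_sum_range (fun i => nv n a i *
        (if i = 0 then (n:ℝ)/a - 1 else if i = 1 then 1 - (n:ℝ)/a
         else if i < n + 2 then 1 else -1)), sum_split,
      sum_const_block 2 (n+2) _ ((1/a)*1)
        (fun j h1 h2 => by rw [nvL n a h1 h2, if_neg (by omega), if_neg (by omega), if_pos h2]),
      sum_const_block (n+2) (2*n+2) _ ((-1/a)*(-1))
        (fun j h1 h2 => by rw [nvR n a h1, if_neg (by omega), if_neg (by omega), if_neg (by omega)]),
      nv0, nv1, e1, e2]
  rw [if_pos rfl, if_neg (by omega), if_pos rfl]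
  ring

lemma absA (n : ℕ) : ∑ i, ∑ j, |dsAdj n i j| = 4*(n:ℝ)+2 := by
  have e1 : (n+2) - 2 = n := by omega
  have e2 : 2*n+2 - (n+2) = n := by omega
  have inner : ∀ i : Fin (2*n+2), ∑ j, |dsAdj n i j| =
      (if i.val = 0 ∨ i.val = 1 then (n:ℝ)+1 else 1) := fun i => by
    show ∑ j : Fin (2*n+2), |nA n i.val j.val| = _
    simp only [nA_abs]
    rw [Fin.sum_univ_eq_sum_range (nA n i.val)]
    exact rowAsum n i.val
  simp only [inner]
  rw [Fin.sum_univ_eq_sum_range (fun i => if i = 0 ∨ i = 1 then (n:ℝ)+1 else 1), sum_split,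
      sum_const_block 2 (n+2) _ 1 (fun j h1 h2 => by rw [if_neg (by omega)]),
      sum_const_block (n+2) (2*n+2) _ 1 (fun j h1 h2 => by rw [if_neg (by omega)]),
      if_pos (by omega), if_pos (by omega), e1, e2]
  ring

lemma rs (n : ℕ) (i : Fin (2*n+2)) :
    ∑ k, dsAdj n i k = (if i.val = 0 ∨ i.val = 1 then (n:ℝ)+1 else 1) := by
  show ∑ k : Fin (2*n+2), nA n i.val k.val = _
  rw [Fin.sum_univ_eq_sum_range (nA n i.val)]
  exact rowAsum n i.val

lemma rs_pos (n : ℕ) (i : Fin (2*n+2)) : 0 < ∑ k, dsAdj n i k := by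
  rw [rs]; split_ifs <;> positivity

lemma absP (n : ℕ) : ∑ i, ∑ j, |dsP n i j| = 2*(n:ℝ)+2 := by
  have inner : ∀ i : Fin (2*n+2), ∑ j, |dsP n i j| = 1 := fun i => by
    have hr := rs_pos n i
    show ∑ j : Fin (2*n+2), |nA n i.val j.val / ∑ k, dsAdj n i k| = 1
    simp only [abs_div, nA_abs, abs_of_pos hr]
    rw [← Finset.sum_div]
    rw [show ∑ j : Fin (2*n+2), nA n i.val j.val = ∑ k, dsAdj n i k from rfl]
    exact div_self (ne_of_gt hr)
  simp only [inner]
  rw [Finset.sum_const, Finset.card_univ, Fintype.card_fin, nsmul_eq_mul]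
  push_cast; ring

lemma vPv (n : ℕ) (a : ℝ) :
    dsV n a ⬝ᵥ (dsP n *ᵥ dsV n a) = 2*((n:ℝ)/a - 1)/((n:ℝ)+1) + 2*(n:ℝ)/a := by
  have e1 : (n+2) - 2 = n := by omega
  have e2 : 2*n+2 - (n+2) = n := by omega
  have inner : ∀ i : Fin (2*n+2), (dsP n *ᵥ dsV n a) i =
      (if i.val = 0 then (n:ℝ)/a - 1 else if i.val = 1 then 1 - (n:ℝ)/a
       else if i.val < n + 2 then 1 else -1) /
      (if i.val = 0 ∨ i.val = 1 then (n:ℝ)+1 else 1) := fun i => by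
    show ∑ j : Fin (2*n+2), (nA n i.val j.val / ∑ k, dsAdj n i k) * nv n a j.val = _
    simp only [div_mul_eq_mul_div]
    rw [← Finset.sum_div, rs,
        show ∑ j : Fin (2*n+2), nA n i.val j.val * nv n a j.val
          = ∑ j ∈ Finset.range (2*n+2), nA n i.val j * nv n a j from
          Fin.sum_univ_eq_sum_range (fun j => nA n i.val j * nv n a j) (2*n+2),
        rowAv]
  show ∑ i : Fin (2*n+2), nv n a i.val * (dsP n *ᵥ dsV n a) i = _
  simp only [inner]
  rw [Fin.sum_univ_eq_sum_range (fun i => nv n a i *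
        ((if i = 0 then (n:ℝ)/a - 1 else if i = 1 then 1 - (n:ℝ)/a
          else if i < n + 2 then 1 else -1) /
         (if i = 0 ∨ i = 1 then (n:ℝ)+1 else 1))), sum_split,
      sum_const_block 2 (n+2) _ ((1/a)*(1/1))
        (fun j h1 h2 => by
          rw [nvL n a h1 h2, if_neg (by omega), if_neg (by omega), if_pos h2, if_neg (by omega)]),
      sum_const_block (n+2) (2*n+2) _ ((-1/a)*((-1)/1))
        (fun j h1 h2 => by
          rw [nvR n a h1, if_neg (by omega), if_neg (by omega), if_neg (by omega),
              if_neg (by omega)]),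
      nv0, nv1, e1, e2]
  norm_num
  ring

lemma moranIA_eq (n : ℕ) (a : ℝ) :
    moranI (dsAdj n) (dsV n a)
      = ((2*(n:ℝ)+2)/(4*(n:ℝ)+2)) * (4*(n:ℝ)/a - 2) / (2 + 2*(n:ℝ)/a^2) := by
  unfold moranI
  rw [centered_dsV, vv, vAv, absA]
  push_cast
  ring

lemma moranIP_eq (n : ℕ) (a : ℝ) :
    moranI (dsP n) (dsV n a)
      = ((2*(n:ℝ)+2)/(2*(n:ℝ)+2)) * (2*((n:ℝ)/a - 1)/((n:ℝ)+1) + 2*(n:ℝ)/a)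
          / (2 + 2*(n:ℝ)/a^2) := by
  unfold moranI
  rw [centered_dsV, vv, vPv, absP]
  push_cast
  ring

lemma tendA (a : ℝ) (ha : a ≠ 0) :
    Tendsto (fun n : ℕ => moranI (dsAdj n) (dsV n a)) atTop (nhds a) := by
  have h1 : Tendsto (fun n : ℕ => (n:ℝ)⁻¹) atTop (nhds 0) := tendsto_inv_atTop_nhds_zero_nat
  set f : ℝ → ℝ := fun x => ((2+2*x)*(4*a-2*a^2*x))/((4+2*x)*(2*a^2*x+2)) with hf
  have hc : ContinuousAt f 0 := by
    apply ContinuousAt.div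
    · fun_prop
    · fun_prop
    · norm_num
  have h2 : Tendsto (fun n : ℕ => f ((n:ℝ)⁻¹)) atTop (nhds (f 0)) := hc.tendsto.comp h1
  have hf0 : f 0 = a := by
    simp only [hf]
    norm_num
    ring
  rw [hf0] at h2
  apply h2.congr'
  filter_upwards [eventually_ge_atTop 1] with n hn
  have hn0 : (0:ℝ) < (n:ℝ) := by exact_mod_cast Nat.lt_of_lt_of_le Nat.zero_lt_one hn
  have hn0' : (n:ℝ) ≠ 0 := ne_of_gt hn0
  have d1 : (4*(n:ℝ)+2) ≠ 0 := by positivity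
  have d2 : (2 + 2*(n:ℝ)/a^2) ≠ 0 := by positivity
  have d3 : (4+2*((n:ℝ))⁻¹) ≠ 0 := by positivity
  have d4 : (2*a^2*((n:ℝ))⁻¹+2) ≠ 0 := by positivity
  rw [moranIA_eq, hf]
  field_simp

lemma tendP (a : ℝ) (ha : a ≠ 0) :
    Tendsto (fun n : ℕ => moranI (dsP n) (dsV n a)) atTop (nhds a) := by
  have h1 : Tendsto (fun n : ℕ => (n:ℝ)⁻¹) atTop (nhds 0) := tendsto_inv_atTop_nhds_zero_nat
  set f : ℝ → ℝ := fun x => (2*a + 4*a*x - 2*a^2*x^2)/((2*a^2*x+2)*(1+x)) with hf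
  have hc : ContinuousAt f 0 := by
    apply ContinuousAt.div
    · fun_prop
    · fun_prop
    · norm_num
  have h2 : Tendsto (fun n : ℕ => f ((n:ℝ)⁻¹)) atTop (nhds (f 0)) := hc.tendsto.comp h1
  have hf0 : f 0 = a := by
    simp only [hf]
    norm_num
  rw [hf0] at h2
  apply h2.congr'
  filter_upwards [eventually_ge_atTop 1] with n hn
  have hn0 : (0:ℝ) < (n:ℝ) := by exact_mod_cast Nat.lt_of_lt_of_le Nat.zero_lt_one hn
  have hn0' : (n:ℝ) ≠ 0 := ne_of_gt hn0
  have d1 : (2*(n:ℝ)+2) ≠ 0 := by positivity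
  have d1' : ((n:ℝ)+1) ≠ 0 := by positivity
  have d2 : (2 + 2*(n:ℝ)/a^2) ≠ 0 := by positivity
  have d3 : (2*a^2*((n:ℝ))⁻¹+2) ≠ 0 := by positivity
  have d4 : (1+((n:ℝ))⁻¹) ≠ 0 := by positivity
  rw [moranIP_eq, hf]
  field_simp
  ring

lemma isAdj (n : ℕ) : IsAdjacencyMatrix (dsAdj n) := by
  refine ⟨?_, ?_, ?_⟩
  · ext i j
    simp only [Matrix.transpose_apply, dsAdj, Matrix.of_apply]
    exact if_congr (by tauto) rfl rfl
  · intro i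
    simp only [dsAdj, Matrix.of_apply]
    rw [if_neg (by omega)]
  · intro i j
    simp only [dsAdj, Matrix.of_apply]
    split_ifs <;> simp

lemma nonconst (n : ℕ) (a : ℝ) : Nonconst (dsV n a) := by
  refine ⟨⟨0, by omega⟩, ⟨1, by omega⟩, ?_⟩
  norm_num [dsV]

theorem moranI_double_star_unbounded' (a : ℝ) (ha : a ≠ 0) :
    Tendsto (fun n : ℕ => moranI (dsAdj n) (dsV n a)) atTop (nhds a) ∧
    Tendsto (fun n : ℕ => moranI (dsP n) (dsV n a)) atTop (nhds a) ∧
    ¬ BddAbove {y : ℝ | ∃ (m : ℕ) (B : Matrix (Fin m) (Fin m) ℝ) (v : Fin m → ℝ),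
        IsAdjacencyMatrix B ∧ Nonconst v ∧ moranI B v = y} ∧
    ¬ BddBelow {y : ℝ | ∃ (m : ℕ) (B : Matrix (Fin m) (Fin m) ℝ) (v : Fin m → ℝ),
        IsAdjacencyMatrix B ∧ Nonconst v ∧ moranI B v = y} ∧
    ¬ BddAbove {y : ℝ | ∃ (m : ℕ) (B : Matrix (Fin m) (Fin m) ℝ) (v : Fin m → ℝ),
        IsAdjacencyMatrix B ∧ (∀ i, 0 < ∑ k, B i k) ∧ Nonconst v ∧
        moranI (Matrix.of fun i j => B i j / ∑ k, B i k) v = y} ∧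
    ¬ BddBelow {y : ℝ | ∃ (m : ℕ) (B : Matrix (Fin m) (Fin m) ℝ) (v : Fin m → ℝ),
        IsAdjacencyMatrix B ∧ (∀ i, 0 < ∑ k, B i k) ∧ Nonconst v ∧
        moranI (Matrix.of fun i j => B i j / ∑ k, B i k) v = y} := by
  refine ⟨tendA a ha, tendP a ha, ?_, ?_, ?_, ?_⟩
  · rintro ⟨M, hM⟩
    set b : ℝ := |M| + 1 with hb
    have hb0 : b ≠ 0 := by positivity
    have hMb : M < b := lt_of_le_of_lt (le_abs_self M) (by rw [hb]; linarith)
    obtain ⟨n, hn⟩ := ((tendA b hb0).eventually (eventually_gt_nhds hMb)).exists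
    have hmem : moranI (dsAdj n) (dsV n b) ∈ {y : ℝ | ∃ (m : ℕ) (B : Matrix (Fin m) (Fin m) ℝ)
        (v : Fin m → ℝ), IsAdjacencyMatrix B ∧ Nonconst v ∧ moranI B v = y} :=
      ⟨2*n+2, dsAdj n, dsV n b, isAdj n, nonconst n b, rfl⟩
    exact absurd (hM hmem) (not_le.mpr hn)
  · rintro ⟨M, hM⟩
    set b : ℝ := -(|M| + 1) with hb
    have hb0 : b ≠ 0 := by rw [hb]; intro h; nlinarith [abs_nonneg M]
    have hMb : b < M := lt_of_lt_of_le (by rw [hb]; nlinarith [neg_abs_le M]) le_rfl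
    obtain ⟨n, hn⟩ := ((tendA b hb0).eventually (eventually_lt_nhds hMb)).exists
    have hmem : moranI (dsAdj n) (dsV n b) ∈ {y : ℝ | ∃ (m : ℕ) (B : Matrix (Fin m) (Fin m) ℝ)
        (v : Fin m → ℝ), IsAdjacencyMatrix B ∧ Nonconst v ∧ moranI B v = y} :=
      ⟨2*n+2, dsAdj n, dsV n b, isAdj n, nonconst n b, rfl⟩
    exact absurd (hM hmem) (not_le.mpr hn)
  · rintro ⟨M, hM⟩
    set b : ℝ := |M| + 1 with hb
    have hb0 : b ≠ 0 := by positivity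
    have hMb : M < b := lt_of_le_of_lt (le_abs_self M) (by rw [hb]; linarith)
    obtain ⟨n, hn⟩ := ((tendP b hb0).eventually (eventually_gt_nhds hMb)).exists
    have hmem : moranI (dsP n) (dsV n b) ∈ {y : ℝ | ∃ (m : ℕ) (B : Matrix (Fin m) (Fin m) ℝ)
        (v : Fin m → ℝ), IsAdjacencyMatrix B ∧ (∀ i, 0 < ∑ k, B i k) ∧ Nonconst v ∧
        moranI (Matrix.of fun i j => B i j / ∑ k, B i k) v = y} :=
      ⟨2*n+2, dsAdj n, dsV n b, isAdj n, rs_pos n, nonconst n b, rfl⟩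
    exact absurd (hM hmem) (not_le.mpr hn)
  · rintro ⟨M, hM⟩
    set b : ℝ := -(|M| + 1) with hb
    have hb0 : b ≠ 0 := by rw [hb]; intro h; nlinarith [abs_nonneg M]
    have hMb : b < M := lt_of_lt_of_le (by rw [hb]; nlinarith [neg_abs_le M]) le_rfl
    obtain ⟨n, hn⟩ := ((tendP b hb0).eventually (eventually_lt_nhds hMb)).exists
    have hmem : moranI (dsP n) (dsV n b) ∈ {y : ℝ | ∃ (m : ℕ) (B : Matrix (Fin m) (Fin m) ℝ)
        (v : Fin m → ℝ), IsAdjacencyMatrix B ∧ (∀ i, 0 < ∑ k, B i k) ∧ Nonconst v ∧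
        moranI (Matrix.of fun i j => B i j / ∑ k, B i k) v = y} :=
      ⟨2*n+2, dsAdj n, dsV n b, isAdj n, rs_pos n, nonconst n b, rfl⟩
    exact absurd (hM hmem) (not_le.mpr hn)


/-- on the double-star graphs `DS_n`, Moran's I of `v_a` with respect
to both the adjacency matrix and the row-standardized adjacency matrix tends to `a` as
`n → ∞`; consequently, Moran's I with respect to `A` and with respect to `P` is
unbounded above and below over all finite simple graphs and non-constant vectors. -/
theorem moranI_double_star_unbounded (a : ℝ) (ha : a ≠ 0) :
    Tendsto (fun n : ℕ => moranI (dsAdj n) (dsV n a)) atTop (nhds a) ∧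
    Tendsto (fun n : ℕ => moranI (dsP n) (dsV n a)) atTop (nhds a) ∧
    ¬ BddAbove {y : ℝ | ∃ (m : ℕ) (B : Matrix (Fin m) (Fin m) ℝ) (v : Fin m → ℝ),
        IsAdjacencyMatrix B ∧ Nonconst v ∧ moranI B v = y} ∧
    ¬ BddBelow {y : ℝ | ∃ (m : ℕ) (B : Matrix (Fin m) (Fin m) ℝ) (v : Fin m → ℝ),
        IsAdjacencyMatrix B ∧ Nonconst v ∧ moranI B v = y} ∧
    ¬ BddAbove {y : ℝ | ∃ (m : ℕ) (B : Matrix (Fin m) (Fin m) ℝ) (v : Fin m → ℝ),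
        IsAdjacencyMatrix B ∧ (∀ i, 0 < ∑ k, B i k) ∧ Nonconst v ∧
        moranI (Matrix.of fun i j => B i j / ∑ k, B i k) v = y} ∧
    ¬ BddBelow {y : ℝ | ∃ (m : ℕ) (B : Matrix (Fin m) (Fin m) ℝ) (v : Fin m → ℝ),
        IsAdjacencyMatrix B ∧ (∀ i, 0 < ∑ k, B i k) ∧ Nonconst v ∧
        moranI (Matrix.of fun i j => B i j / ∑ k, B i k) v = y} :=
  moranI_double_star_unbounded' a ha
end
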